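/- arXiv:1312.0542 — 5 statements merged into one kernel-verified Lean document; each statement's English description precedes it below -/
import Mathlib

section
/- Let G be a simple graph on a finite vertex set with at least 3 vertices, and let v and w be distinct vertices of G with the same neighborhood. Then G is connected if and only if the induced subgraph G − v on the remaining vertices is connected. -/
/-!
Folding `v` onto its duplicate `w` is a surjective homomorphism `G →g G - v`, so connectivity
passes from `G` to `G - v`. Conversely, `G - v` has at least two vertices, so when it is connected
`w` has a neighbour there; that vertex is also a neighbour of `v`, which attaches `v` to `G - v`.
-/

namespace SimpleGraph

variable {V : Type*} {G : SimpleGraph V} {u v w : V}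

lemma adj_of_neighborSet_eq (hdup : G.neighborSet v = G.neighborSet w) (h : G.Adj v u) :
    G.Adj w u :=
  show u ∈ G.neighborSet w from hdup ▸ h

def foldDuplicate [DecidableEq V] (hvw : v ≠ w) (hdup : G.neighborSet v = G.neighborSet w) :
    G →g G.induce {u | u ≠ v} where
  toFun u := if hu : u = v then ⟨w, hvw.symm⟩ else ⟨u, hu⟩
  map_rel' {a b} hab := by
    simp only [comap_adj, Function.Embedding.coe_subtype]
    split_ifs with ha hb hb
    · exact absurd (ha ▸ hb ▸ hab) (G.irrefl)
    · exact adj_of_neighborSet_eq hdup (ha ▸ hab)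
    · exact (adj_of_neighborSet_eq hdup (hb ▸ hab.symm)).symm
    · exact hab

lemma foldDuplicate_surjective [DecidableEq V] (hvw : v ≠ w)
    (hdup : G.neighborSet v = G.neighborSet w) : Function.Surjective (foldDuplicate hvw hdup) :=
  fun u => ⟨u, dif_neg u.2⟩

lemma Connected.induce_ne_of_neighborSet_eq (hG : G.Connected) (hvw : v ≠ w)
    (hdup : G.neighborSet v = G.neighborSet w) : (G.induce {u | u ≠ v}).Connected := by
  classical
  exact hG.map _ (foldDuplicate_surjective hvw hdup)

lemma Connected.of_induce_ne (hG : (G.induce {u | u ≠ v}).Connected) (hvw : G.Adj v w) :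
    G.Connected := by
  refine (connected_iff_exists_forall_reachable G).2 ⟨v, fun u => ?_⟩
  obtain rfl | hu := eq_or_ne u v
  · rfl
  · exact hvw.reachable.trans <|
      (hG ⟨w, hvw.ne.symm⟩ ⟨u, hu⟩).map (Embedding.induce {u | u ≠ v}).toHom

lemma nontrivial_ne_of_three_le_card [Fintype V] (hcard : 3 ≤ Fintype.card V) (v : V) :
    Nontrivial {u : V | u ≠ v} := by
  classical
  rw [← Fintype.one_lt_card_iff_nontrivial]
  have : Fintype.card {u : V | u ≠ v} = Fintype.card V - 1 := by
    simp [Set.coe_ofPred, Fintype.card_subtype_compl]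
  omega

end SimpleGraph

open SimpleGraph in
/-- If `G` is a simple graph on at least 3 vertices and `v ≠ w` are duplicate
vertices (same neighborhood), then `G` is connected iff `G - v` is connected. -/
theorem connected_iff_deleteDuplicate_connected {V : Type*} [Fintype V]
    (G : SimpleGraph V) (hcard : 3 ≤ Fintype.card V) (v w : V) (hvw : v ≠ w)
    (hdup : G.neighborSet v = G.neighborSet w) :
    G.Connected ↔ (G.induce {u : V | u ≠ v}).Connected := by
  refine ⟨fun hG => hG.induce_ne_of_neighborSet_eq hvw hdup, fun hGv => ?_⟩
  have := nontrivial_ne_of_three_le_card hcard v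
  obtain ⟨x, hwx⟩ := hGv.preconnected.exists_adj_of_nontrivial ⟨w, hvw.symm⟩
  exact hGv.of_induce_ne (adj_of_neighborSet_eq hdup.symm hwx)
end

section
/- Let G be a simple graph, let v and w be distinct vertices of G with the same neighborhood, and let r be a natural number. Then G admits a proper coloring with at most r colors if and only if the induced subgraph G − v admits a proper coloring with at most r colors. -/
namespace SimpleGraph

variable {V : Type*} {G : SimpleGraph V} {v w : V}

noncomputable def homInduceNeOfNeighborSetSubset (hvw : v ≠ w)
    (hsub : G.neighborSet v ⊆ G.neighborSet w) : G →g G.induce {u | u ≠ v} := by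
  classical
  exact
    { toFun := fun u => if h : u = v then ⟨w, hvw.symm⟩ else ⟨u, h⟩
      map_rel' := by
        intro a b hab
        rw [induce_adj]
        split_ifs with ha hb hb
        · exact absurd (ha ▸ hb ▸ hab) G.irrefl
        · exact hsub (ha ▸ hab)
        · exact (hsub (hb ▸ hab.symm) :).symm
        · exact hab }

end SimpleGraph

/-- If `v ≠ w` are duplicate vertices of `G` (same neighborhood), then `G` is
properly colorable with at most `r` colors iff `G - v` is. -/
theorem colorable_iff_deleteDuplicate_colorable {V : Type*}
    (G : SimpleGraph V) (v w : V) (hvw : v ≠ w)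
    (hdup : G.neighborSet v = G.neighborSet w) (r : ℕ) :
    G.Colorable r ↔ (G.induce {u : V | u ≠ v}).Colorable r :=
  ⟨fun h => h.of_hom (SimpleGraph.Embedding.induce _).toHom,
    fun h => h.of_hom (SimpleGraph.homInduceNeOfNeighborSetSubset hvw hdup.subset)⟩
end

section
/- Let G be a connected simple graph on a finite vertex set that is not a tree (i.e., G contains a cycle). Then there exists a unique vertex set S such that (i) every vertex of S has at least two neighbors in S, and (ii) every vertex set T in which every vertex of T has at least two neighbors in T satisfies T ⊆ S. Moreover, S has at least 3 vertices and the induced subgraph of G on S is connected. -/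
/-!
The union of all vertex sets in which every vertex has two neighbours again has this property,
so it is the unique largest one, the 2-core. A cycle is such a set, so the 2-core is nonempty,
and any nonempty such set has at least three vertices: a vertex and two of its neighbours.
For connectivity, a path between two vertices of the 2-core can be added to it without
destroying the property (its interior vertices have their two path neighbours), so by
maximality every such path already lies in the 2-core.
-/

namespace SimpleGraph

variable {V : Type*} (G : SimpleGraph V)

def MinDegTwoOn (T : Set V) : Prop :=
  ∀ v ∈ T, 2 ≤ (T ∩ G.neighborSet v).ncard

def twoCore : Set V :=
  ⋃₀ {T | G.MinDegTwoOn T}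

variable {G}

theorem subset_twoCore {T : Set V} (hT : G.MinDegTwoOn T) : T ⊆ G.twoCore :=
  Set.subset_sUnion_of_mem hT

theorem MinDegTwoOn.three_le_ncard {T : Set V} (hT : G.MinDegTwoOn T) (hfin : T.Finite)
    (hne : T.Nonempty) : 3 ≤ T.ncard := by
  obtain ⟨v, hv⟩ := hne
  have hvN : v ∉ T ∩ G.neighborSet v := fun h => G.irrefl h.2
  calc 3 ≤ (insert v (T ∩ G.neighborSet v)).ncard := by
        rw [Set.ncard_insert_of_notMem hvN (hfin.subset Set.inter_subset_left)]
        exact Nat.succ_le_succ (hT v hv)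
    _ ≤ T.ncard := Set.ncard_le_ncard (Set.insert_subset hv Set.inter_subset_left) hfin

section LocallyFinite

variable [G.LocallyFinite]

theorem ncard_inter_neighborSet_mono {S T : Set V} (hST : S ⊆ T) (v : V) :
    (S ∩ G.neighborSet v).ncard ≤ (T ∩ G.neighborSet v).ncard :=
  Set.ncard_le_ncard (Set.inter_subset_inter_left _ hST)
    ((G.neighborSet v).toFinite.subset Set.inter_subset_right)

theorem Subgraph.two_le_ncard_inter_neighborSet {H : G.Subgraph} {T : Set V}
    (hT : H.verts ⊆ T) {v : V} (hv : 2 ≤ (H.neighborSet v).ncard) :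
    2 ≤ (T ∩ G.neighborSet v).ncard :=
  hv.trans (Set.ncard_le_ncard (fun _ hw => ⟨hT (H.edge_vert hw.symm), H.adj_sub hw⟩)
    ((G.neighborSet v).toFinite.subset Set.inter_subset_right))

theorem minDegTwoOn_twoCore : G.MinDegTwoOn G.twoCore := by
  rintro v ⟨T, hT, hvT⟩
  exact (hT v hvT).trans (ncard_inter_neighborSet_mono (subset_twoCore hT) v)

theorem Walk.IsCycle.minDegTwoOn_support {u : V} {c : G.Walk u u} (hc : c.IsCycle) :
    G.MinDegTwoOn {v | v ∈ c.support} := fun _ hv =>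
  Subgraph.two_le_ncard_inter_neighborSet c.verts_toSubgraph.le
    (hc.ncard_neighborSet_toSubgraph_eq_two hv).ge

theorem MinDegTwoOn.union_support_of_isPath {S : Set V} (hS : G.MinDegTwoOn S) {u v : V}
    {p : G.Walk u v} (hp : p.IsPath) (hu : u ∈ S) (hv : v ∈ S) :
    G.MinDegTwoOn (S ∪ {w | w ∈ p.support}) := by
  intro w hw
  by_cases hwS : w ∈ S
  · exact (hS w hwS).trans (ncard_inter_neighborSet_mono Set.subset_union_left w)
  obtain ⟨i, rfl, hi⟩ := p.mem_support_iff_exists_getVert.mp (hw.resolve_left hwS)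
  have hi0 : i ≠ 0 := by rintro rfl; exact hwS (by simpa using hu)
  have hil : i < p.length := hi.lt_of_ne (by rintro rfl; exact hwS (by simpa using hv))
  exact Subgraph.two_le_ncard_inter_neighborSet
    (p.verts_toSubgraph.le.trans Set.subset_union_right)
    (hp.ncard_neighborSet_toSubgraph_internal_eq_two hi0 hil).ge

theorem Walk.IsPath.support_subset_twoCore {u v : V} {p : G.Walk u v} (hp : p.IsPath)
    (hu : u ∈ G.twoCore) (hv : v ∈ G.twoCore) : {w | w ∈ p.support} ⊆ G.twoCore :=
  Set.subset_union_right.trans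
    (subset_twoCore (minDegTwoOn_twoCore.union_support_of_isPath hp hu hv))

theorem connected_induce_twoCore (hG : G.Preconnected) {u : V} (hu : u ∈ G.twoCore) :
    (G.induce G.twoCore).Connected := by
  classical
  refine G.induce_connected_of_patches u hu fun {v} hv => ?_
  let p := (hG u v).some.toPath
  exact ⟨_, p.2.support_subset_twoCore hu hv, p.1.start_mem_support, p.1.end_mem_support,
    p.1.connected_induce_support.preconnected _ _⟩

end LocallyFinite

end SimpleGraph

open SimpleGraph

/-- A connected simple graph `G` on a finite vertex set that is not a tree
(i.e. contains a cycle) has a unique core: a unique vertex set `S` such that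
every vertex of `S` has at least two neighbors in `S`, and `S` contains every
vertex set `T` in which every vertex has at least two neighbors in `T`.
Moreover this core has at least 3 vertices and induces a connected subgraph. -/
theorem core_exists_unique {V : Type*} [Fintype V] (G : SimpleGraph V)
    (hconn : G.Connected) (hcyc : ¬ G.IsAcyclic) :
    ∃ S : Set V,
      ((∀ v ∈ S, 2 ≤ (S ∩ G.neighborSet v).ncard) ∧
        (∀ T : Set V, (∀ v ∈ T, 2 ≤ (T ∩ G.neighborSet v).ncard) → T ⊆ S)) ∧
      (∀ S' : Set V,
        ((∀ v ∈ S', 2 ≤ (S' ∩ G.neighborSet v).ncard) ∧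
          (∀ T : Set V, (∀ v ∈ T, 2 ≤ (T ∩ G.neighborSet v).ncard) → T ⊆ S')) →
        S' = S) ∧
      3 ≤ S.ncard ∧ (G.induce S).Connected := by
  classical
  obtain ⟨u, c, hc⟩ : ∃ (u : V) (c : G.Walk u u), c.IsCycle := by
    simpa [IsAcyclic] using hcyc
  have hu : u ∈ G.twoCore := subset_twoCore hc.minDegTwoOn_support c.start_mem_support
  refine ⟨G.twoCore, ⟨minDegTwoOn_twoCore, fun T => subset_twoCore⟩,
    fun S ⟨hS, hmax⟩ => (subset_twoCore hS).antisymm (hmax _ minDegTwoOn_twoCore),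
    minDegTwoOn_twoCore.three_le_ncard (Set.toFinite _) ⟨u, hu⟩,
    connected_induce_twoCore hconn.preconnected hu⟩
end

section
/- For every finite set V, the map sending a simple graph G with vertex set V to the pair (π_G, Q_G) — where π_G is the partition of V whose blocks are the maximal classes of vertices with equal neighborhoods in G, and Q_G is the quotient graph whose vertices are the blocks of π_G, with two distinct blocks adjacent if and only if some (equivalently, every) pair of representatives is adjacent in G — is a bijection from the set of all simple graphs with vertex set V onto the set of pairs (π, H) where π is a partition of V into nonempty blocks and H is a point-determining simple graph whose vertex set is the set of blocks of π. -/
/-- The equivalence relation on vertices of `G` given by having equal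
neighborhoods.  A setoid on `V` encodes exactly a partition of `V` into
nonempty blocks (its equivalence classes, i.e. the elements of its quotient). -/
def neighborSetoid {V : Type*} (G : SimpleGraph V) : Setoid V :=
  ⟨fun u v => G.neighborSet u = G.neighborSet v,
    ⟨fun _ => rfl, Eq.symm, Eq.trans⟩⟩

/-- The quotient graph of `G` by the same-neighborhood relation: two blocks are
adjacent iff some (equivalently, every) pair of representatives is adjacent
in `G`. -/
def neighborQuotientGraph {V : Type*} (G : SimpleGraph V) :
    SimpleGraph (Quotient (neighborSetoid G)) where
  Adj a b := ∃ u v : V, a = Quotient.mk (neighborSetoid G) u ∧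
      b = Quotient.mk (neighborSetoid G) v ∧ G.Adj u v
  symm := by
    constructor
    rintro a b ⟨u, v, hu, hv, h⟩
    exact ⟨v, u, hv, hu, h.symm⟩
  loopless := by
    constructor
    rintro a ⟨u, v, hu, hv, h⟩
    have hq : G.neighborSet u = G.neighborSet v := Quotient.exact (hu.symm.trans hv)
    have hmem : v ∈ G.neighborSet u := h
    rw [hq] at hmem
    exact G.irrefl hmem

/-!
A graph `G` is recovered from its quotient `Q` by pulling `Q` back along the projection
`V → V/~`: representatives of distinct blocks are adjacent exactly when the blocks are. This
gives injectivity. Conversely, pulling a point-determining graph `H` on the blocks of `π` back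
to `V` yields a graph whose same-neighborhood classes are exactly the blocks of `π`, because
pulling back along a surjection identifies neighborhoods precisely when `H` does.
-/

open Function

namespace SimpleGraph

variable {V W : Type*}

lemma comap_injective_of_surjective {f : V → W} (hf : Surjective f) :
    Injective (SimpleGraph.comap f) := by
  intro H H' h
  ext a b
  obtain ⟨u, rfl⟩ := hf a
  obtain ⟨v, rfl⟩ := hf b
  exact Iff.of_eq congr(($h).Adj u v)

lemma neighborSetoid_comap {H : SimpleGraph W} {f : V → W} (hf : Surjective f)
    (hH : Injective H.neighborSet) : neighborSetoid (H.comap f) = Setoid.ker f :=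
  Setoid.ext fun _ _ => (Set.preimage_injective.2 hf).eq_iff.trans hH.eq_iff

end SimpleGraph

section

open SimpleGraph

variable {V : Type*}

lemma comap_mk_neighborQuotientGraph (G : SimpleGraph V) :
    (neighborQuotientGraph G).comap (Quotient.mk _) = G := by
  ext u v
  refine ⟨?_, fun h => ⟨u, v, rfl, rfl, h⟩⟩
  rintro ⟨u', v', hu, hv, h⟩
  have hu' : G.neighborSet u = G.neighborSet u' := Quotient.exact hu
  have hv' : G.neighborSet v = G.neighborSet v' := Quotient.exact hv
  have huv' : v' ∈ G.neighborSet u := hu' ▸ h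
  have hvu : u ∈ G.neighborSet v := hv' ▸ huv'.symm
  exact hvu.symm

lemma leftInverse_comap_mk_neighborQuotientGraph :
    LeftInverse (fun p : Σ s : Setoid V, SimpleGraph (Quotient s) => p.2.comap (Quotient.mk p.1))
      (fun G => ⟨neighborSetoid G, neighborQuotientGraph G⟩) :=
  comap_mk_neighborQuotientGraph

lemma neighborQuotientGraph_neighborSet_injective (G : SimpleGraph V) :
    Injective (neighborQuotientGraph G).neighborSet := by
  refine Quotient.ind₂ fun u v h => Quotient.sound ?_
  have h' := congrArg (Quotient.mk _ ⁻¹' ·) h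
  rwa [← neighborSet_comap, ← neighborSet_comap, comap_mk_neighborQuotientGraph] at h'

lemma neighborQuotient_comap_mk {s : Setoid V} {H : SimpleGraph (Quotient s)}
    (hH : Injective H.neighborSet) :
    (⟨neighborSetoid (H.comap (Quotient.mk s)), neighborQuotientGraph (H.comap (Quotient.mk s))⟩ :
      Σ s : Setoid V, SimpleGraph (Quotient s)) = ⟨s, H⟩ := by
  have hs : neighborSetoid (H.comap (Quotient.mk s)) = s :=
    (neighborSetoid_comap Quotient.mk_surjective hH).trans (Setoid.ker_mk_eq s)
  generalize hG : H.comap (Quotient.mk s) = G at hs ⊢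
  subst hs
  exact congrArg _ <| comap_injective_of_surjective Quotient.mk_surjective <|
    (comap_mk_neighborQuotientGraph G).trans hG.symm

end

theorem graph_equiv_partition_pointDetermining_general {V : Type*} :
    Function.Injective
      (fun G : SimpleGraph V =>
        (⟨neighborSetoid G, neighborQuotientGraph G⟩ :
          Σ s : Setoid V, SimpleGraph (Quotient s))) ∧
    Set.range
      (fun G : SimpleGraph V =>
        (⟨neighborSetoid G, neighborQuotientGraph G⟩ :
          Σ s : Setoid V, SimpleGraph (Quotient s))) =
      {p : Σ s : Setoid V, SimpleGraph (Quotient s) |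
        ∀ a b : Quotient p.1, p.2.neighborSet a = p.2.neighborSet b → a = b} := by
  refine ⟨leftInverse_comap_mk_neighborQuotientGraph.injective,
    Set.ext fun p => ⟨?_, fun hp => ⟨_, neighborQuotient_comap_mk hp⟩⟩⟩
  rintro ⟨G, rfl⟩
  exact neighborQuotientGraph_neighborSet_injective G

/-- The map sending a simple graph `G` on a finite vertex set `V` to the pair
consisting of the partition of `V` into classes of vertices with equal
neighborhoods (encoded as a setoid) together with the quotient graph on the
blocks, is a bijection onto the set of pairs `(π, H)` where `π` is a partition
of `V` and `H` is a point-determining simple graph on the blocks of `π`. -/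
theorem graph_equiv_partition_pointDetermining {V : Type*} [Fintype V] :
    Function.Injective
      (fun G : SimpleGraph V =>
        (⟨neighborSetoid G, neighborQuotientGraph G⟩ :
          Σ s : Setoid V, SimpleGraph (Quotient s))) ∧
    Set.range
      (fun G : SimpleGraph V =>
        (⟨neighborSetoid G, neighborQuotientGraph G⟩ :
          Σ s : Setoid V, SimpleGraph (Quotient s))) =
      {p : Σ s : Setoid V, SimpleGraph (Quotient s) |
        ∀ a b : Quotient p.1, p.2.neighborSet a = p.2.neighborSet b → a = b} :=
  graph_equiv_partition_pointDetermining_general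
end

section
/- Let Φ be a class of finite simple graphs, invariant under graph isomorphism, such that: every graph in Φ is connected; the one-vertex graph belongs to Φ; Φ is closed under creating and deleting endpoints (for every graph G and vertex v of degree 1 in G, G belongs to Φ if and only if G − v belongs to Φ); and the graphs of Φ with at least two vertices are closed under creating and deleting duplicates of vertices (for every graph G with at least 3 vertices and distinct vertices v, w of G with the same neighborhood, G belongs to Φ if and only if G − v belongs to Φ). Then for every natural number n with n ≠ 2, the number of isomorphism classes of point-determining graphs in Φ on n vertices equals the number of isomorphism classes of graphs in Φ on n vertices having no vertex of degree 1. -/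
/-- The setoid on graphs on `Fin n` satisfying a predicate `P`, identifying
isomorphic graphs; its quotient is the set of isomorphism classes. -/
def graphIsoSetoid {n : ℕ} (P : SimpleGraph (Fin n) → Prop) :
    Setoid {G : SimpleGraph (Fin n) // P G} :=
  ⟨fun G H => Nonempty (G.1 ≃g H.1),
    ⟨fun _ => ⟨SimpleGraph.Iso.refl⟩,
     fun ⟨e⟩ => ⟨e.symm⟩,
     fun ⟨e⟩ ⟨f⟩ => ⟨e.trans f⟩⟩⟩

/-!
Making one of two twins `s`, `t` a leaf attached to the other (`TwinToLeaf`) preserves `Φ`: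
before and after the step the graph minus `t` is the same. The step is undone by turning the leaf
back into a twin (`replaceVertex`). On connected graphs with at least four vertices it strictly
decreases (number of edges, number of leaves) lexicographically, and up to isomorphism it is
confluent both forwards and backwards. So on isomorphism classes, sending a terminal class to an
initial class above it is injective, and so is the map back; the terminal classes are the
point-determining graphs and the initial ones the graphs without endpoints. On one or three
vertices the two conditions coincide for connected graphs (on two they do not: an edge is
point-determining but has endpoints).
-/

namespace Relation

variable {α : Type*} {R : α → α → Prop}

def ReflGenDiamond (R : α → α → Prop) : Prop :=
  ∀ a b c, R a b → R a c → ∃ d, ReflGen R b d ∧ ReflGen R c d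

theorem exists_reflTransGen_forall_not_of_wellFounded (hR : WellFounded R) (a : α) :
    ∃ b, ReflTransGen R b a ∧ ∀ c, ¬R c b := by
  induction a using hR.induction with
  | _ a ih =>
    by_cases h : ∃ c, R c a
    · obtain ⟨c, hca⟩ := h
      obtain ⟨b, hbc, hb⟩ := ih c hca
      exact ⟨b, hbc.tail hca, hb⟩
    · exact ⟨a, .refl, not_exists.1 h⟩

theorem ReflGenDiamond.eq_of_reflTransGen (hR : ReflGenDiamond R) {a b c : α}
    (hab : ReflTransGen R a b) (hac : ReflTransGen R a c) (hb : ∀ d, ¬R b d)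
    (hc : ∀ d, ¬R c d) : b = c := by
  have eq_of_terminal {x y : α} (h : ReflTransGen R x y) (hx : ∀ z, ¬R x z) : x = y :=
    h.cases_head.resolve_right fun ⟨z, hz, _⟩ => hx z hz
  obtain ⟨d, hbd, hcd⟩ := church_rosser
    (fun a b c hab hac => (hR a b c hab hac).imp fun _ h => ⟨h.1, h.2.to_reflTransGen⟩) hab hac
  rw [eq_of_terminal hbd hb, eq_of_terminal hcd hc]

theorem card_terminal_le_card_initial [Finite α] (hwf : WellFounded R) (hR : ReflGenDiamond R) :
    Nat.card {a // ∀ b, ¬R a b} ≤ Nat.card {a // ∀ b, ¬R b a} := by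
  choose f hf hf' using exists_reflTransGen_forall_not_of_wellFounded hwf
  refine Nat.card_le_card_of_injective (fun a => ⟨f a, hf' a⟩) fun a a' h => Subtype.ext ?_
  have hfa : f a = f a' := congrArg Subtype.val h
  exact hR.eq_of_reflTransGen (hf a) (hfa ▸ hf a') a.2 a'.2

theorem wellFounded_of_finite_of_lt {β : Type*} [Finite α] [Preorder β] (f : α → β)
    (hf : ∀ a b, R a b → f a < f b) : WellFounded R :=
  have : IsTrans α (InvImage (· < ·) f) := ⟨fun _ _ _ => lt_trans⟩
  have : Std.Irrefl (InvImage (· < ·) f) := ⟨fun _ => lt_irrefl _⟩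
  Subrelation.wf (hf _ _) (Finite.wellFounded_of_trans_of_irrefl _)

theorem card_terminal_eq_card_initial {β : Type*} [Finite α] [Preorder β] (f : α → β)
    (hf : ∀ a b, R a b → f b < f a) (hR : ReflGenDiamond R) (hR' : ReflGenDiamond (flip R)) :
    Nat.card {a // ∀ b, ¬R a b} = Nat.card {a // ∀ b, ¬R b a} :=
  (card_terminal_le_card_initial
      (wellFounded_of_finite_of_lt (OrderDual.toDual ∘ f) fun a b h => hf a b h) hR).antisymm
    (card_terminal_le_card_initial (wellFounded_of_finite_of_lt f fun a b h => hf b a h) hR')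

theorem flip_map {β γ δ : Type*} (r : α → β → Prop) (f : α → γ) (g : β → δ) :
    flip (Relation.Map r f g) = Relation.Map (flip r) g f := by
  ext c d
  exact ⟨fun ⟨a, b, h, ha, hb⟩ => ⟨b, a, h, hb, ha⟩,
    fun ⟨b, a, h, hb, ha⟩ => ⟨a, b, h, ha, hb⟩⟩

section Quotient

variable {β : Type*} {s : Setoid β} {r : β → β → Prop}

theorem map_mk_mk_iff (hr : ∀ a a' b, s a a' → r a b → ∃ b', r a' b' ∧ s b b') (a : β)
    (y : Quotient s) :
    Relation.Map r (Quotient.mk s) (Quotient.mk s) (Quotient.mk s a) y ↔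
      ∃ b, r a b ∧ Quotient.mk s b = y := by
  constructor
  · rintro ⟨a', b', h, ha', rfl⟩
    obtain ⟨b, hab, hb⟩ := hr a' a b' (Quotient.exact ha') h
    exact ⟨b, hab, (Quotient.sound hb).symm⟩
  · rintro ⟨b, h, rfl⟩
    exact ⟨a, b, h, rfl, rfl⟩

theorem reflGenDiamond_map_mk_mk (hr : ∀ a a' b, s a a' → r a b → ∃ b', r a' b' ∧ s b b')
    (hd : ∀ a b c, r a b → r a c → s b c ∨ ∃ d, r b d ∧ r c d) :
    ReflGenDiamond (Relation.Map r (Quotient.mk s) (Quotient.mk s)) := by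
  rintro _ _ z ⟨a, b, hab, rfl, rfl⟩ hz
  obtain ⟨c, hac, rfl⟩ := (map_mk_mk_iff hr a z).1 hz
  rcases hd a b c hab hac with hbc | ⟨d, hbd, hcd⟩
  · exact ⟨_, .refl, by rw [Quotient.sound hbc]⟩
  · exact ⟨_, .single ⟨b, d, hbd, rfl, rfl⟩, .single ⟨c, d, hcd, rfl, rfl⟩⟩

end Quotient

end Relation

namespace SimpleGraph

variable {V W : Type*} {G H H₁ H₂ : SimpleGraph V} {s t a : V}

theorem not_adj_of_neighborSet_eq (h : G.neighborSet s = G.neighborSet t) : ¬G.Adj s t :=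
  fun hst => G.loopless.irrefl t (h ▸ hst : t ∈ G.neighborSet t)

theorem adj_of_neighborSet_eq_singleton (h : G.neighborSet t = {s}) : G.Adj t s := by
  rw [← mem_neighborSet, h]
  rfl

theorem ncard_neighborSet_ne_one_of_adj {v a b : V} (ha : G.Adj v a) (hb : G.Adj v b)
    (hab : a ≠ b) : (G.neighborSet v).ncard ≠ 1 := by
  rw [Ne, Set.ncard_eq_one]
  rintro ⟨c, hc⟩
  have ha' : a ∈ ({c} : Set V) := hc ▸ ha
  have hb' : b ∈ ({c} : Set V) := hc ▸ hb
  exact hab (ha'.trans hb'.symm)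

def replaceByLeaf (G : SimpleGraph V) (s t : V) : SimpleGraph V :=
  G.deleteIncidenceSet t ⊔ edge s t

theorem replaceByLeaf_adj {a b : V} : (G.replaceByLeaf s t).Adj a b ↔
    G.Adj a b ∧ a ≠ t ∧ b ≠ t ∨ (a = s ∧ b = t ∨ a = t ∧ b = s) ∧ a ≠ b := by
  simp [replaceByLeaf, deleteIncidenceSet_adj, edge_adj]

theorem neighborSet_replaceByLeaf_self (hst : s ≠ t) :
    (G.replaceByLeaf s t).neighborSet t = {s} := by
  ext b
  simp only [mem_neighborSet, replaceByLeaf_adj, Set.mem_singleton_iff]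
  grind

theorem neighborSet_replaceByLeaf_of_ne (hs : a ≠ s) (ht : a ≠ t) :
    (G.replaceByLeaf s t).neighborSet a = G.neighborSet a \ {t} := by
  ext b
  simp [replaceByLeaf_adj, hs, ht]

theorem induce_replaceByLeaf :
    (G.replaceByLeaf s t).induce {u | u ≠ t} = G.induce {u | u ≠ t} := by
  ext ⟨a, ha : a ≠ t⟩ ⟨b, hb : b ≠ t⟩
  simp [replaceByLeaf_adj, ha, hb]

theorem replaceByLeaf_comm {s' t' : V} (h₁ : t ≠ t') (h₂ : t ≠ s') (h₃ : s ≠ t') :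
    (G.replaceByLeaf s t).replaceByLeaf s' t' = (G.replaceByLeaf s' t').replaceByLeaf s t := by
  ext a b
  simp only [replaceByLeaf_adj]
  grind

def Iso.replaceByLeaf {G' : SimpleGraph W} (e : G ≃g G') (s t : V) :
    G.replaceByLeaf s t ≃g G'.replaceByLeaf (e s) (e t) where
  toEquiv := e.toEquiv
  map_rel_iff' := by simp [replaceByLeaf_adj, e.map_adj_iff]

def leafSet (G : SimpleGraph V) : Set V := {v | (G.neighborSet v).ncard = 1}

theorem Iso.ncard_edgeSet_eq {G' : SimpleGraph W} (e : G ≃g G') :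
    G.edgeSet.ncard = G'.edgeSet.ncard := by
  rw [← Nat.card_coe_set_eq, ← Nat.card_coe_set_eq, Nat.card_congr e.mapEdgeSet]

theorem Iso.ncard_leafSet_eq {G' : SimpleGraph W} (e : G ≃g G') :
    G.leafSet.ncard = G'.leafSet.ncard := by
  rw [← Nat.card_coe_set_eq, ← Nat.card_coe_set_eq]
  refine Nat.card_congr (e.toEquiv.subtypeEquiv fun v => ?_)
  change _ ↔ (G'.neighborSet (e v)).ncard = 1
  rw [← e.image_neighborSet, Set.ncard_image_of_injective _ e.injective]
  rfl

theorem ncard_edgeSet_replaceByLeaf [Finite V] (hst : s ≠ t) (hn : ¬G.Adj s t) :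
    (G.replaceByLeaf s t).edgeSet.ncard + (G.neighborSet t).ncard = G.edgeSet.ncard + 1 := by
  classical
  have hinc : (G.incidenceSet t).ncard = (G.neighborSet t).ncard := by
    rw [← Nat.card_coe_set_eq, ← Nat.card_coe_set_eq,
      Nat.card_congr (G.incidenceSetEquivNeighborSet t)]
  have hle : (G.incidenceSet t).ncard ≤ G.edgeSet.ncard :=
    Set.ncard_le_ncard (G.incidenceSet_subset t)
  have hnot : s(s, t) ∉ G.edgeSet \ G.incidenceSet t := fun h => hn h.1
  rw [replaceByLeaf, edgeSet_sup, edgeSet_deleteIncidenceSet, edgeSet_edge_of_ne hst,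
    Set.union_singleton, Set.ncard_insert_of_notMem hnot,
    Set.ncard_sdiff (G.incidenceSet_subset t)]
  omega

def TwinToLeaf (G H : SimpleGraph V) : Prop :=
  ∃ s t, s ≠ t ∧ G.neighborSet s = G.neighborSet t ∧ H = G.replaceByLeaf s t

theorem exists_twinToLeaf_iff : (∃ H, G.TwinToLeaf H) ↔ ¬Function.Injective G.neighborSet := by
  constructor
  · rintro ⟨_, s, t, hst, hN, -⟩ hinj
    exact hst (hinj hN)
  · simp only [Function.Injective, not_forall]
    rintro ⟨s, t, hN, hst⟩
    exact ⟨_, s, t, hst, hN, rfl⟩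

theorem TwinToLeaf.exists_iso {G' : SimpleGraph W} (h : G.TwinToLeaf H) (e : G ≃g G') :
    ∃ H', G'.TwinToLeaf H' ∧ Nonempty (H ≃g H') := by
  obtain ⟨s, t, hst, hN, rfl⟩ := h
  refine ⟨_, ⟨e s, e t, e.injective.ne hst, ?_, rfl⟩, ⟨e.replaceByLeaf s t⟩⟩
  rw [← e.image_neighborSet, ← e.image_neighborSet, hN]

def Iso.ofNeighborSetEq (σ : Equiv.Perm V) (hσ : ∀ x, G.neighborSet (σ x) = G.neighborSet x) :
    G ≃g G where
  toEquiv := σ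
  map_rel_iff' {a b} := by
    change σ b ∈ G.neighborSet (σ a) ↔ _
    rw [hσ, mem_neighborSet, adj_comm, ← mem_neighborSet, hσ, mem_neighborSet, adj_comm]

theorem neighborSet_swap_apply [DecidableEq V] (h : G.neighborSet s = G.neighborSet t) (x : V) :
    G.neighborSet (Equiv.swap s t x) = G.neighborSet x := by
  rcases eq_or_ne x s with rfl | hs
  · rw [Equiv.swap_apply_left, h]
  rcases eq_or_ne x t with rfl | ht
  · rw [Equiv.swap_apply_right, h]
  · rw [Equiv.swap_apply_of_ne_of_ne hs ht]

theorem exists_iso_apply_eq_of_neighborSet_eq {a b c d : V} (hab : a ≠ b) (hcd : c ≠ d)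
    (hb : G.neighborSet b = G.neighborSet a) (hc : G.neighborSet c = G.neighborSet a)
    (hd : G.neighborSet d = G.neighborSet a) : ∃ σ : G ≃g G, σ a = c ∧ σ b = d := by
  classical
  set b' := Equiv.swap a c b
  have hb' : G.neighborSet b' = G.neighborSet a := by
    rw [neighborSet_swap_apply hc.symm, hb]
  refine ⟨Iso.ofNeighborSetEq ((Equiv.swap a c).trans (Equiv.swap b' d)) fun x => ?_, ?_, ?_⟩
  · simp only [Equiv.trans_apply]
    rw [neighborSet_swap_apply (hb'.trans hd.symm), neighborSet_swap_apply hc.symm]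
  · have hcb' : c ≠ b' := fun h => hab (by simpa [b'] using congrArg (Equiv.swap a c) h)
    simp [Iso.ofNeighborSetEq, Equiv.swap_apply_of_ne_of_ne hcb' hcd]
  · simp [Iso.ofNeighborSetEq, b']

theorem TwinToLeaf.diamond (h₁ : G.TwinToLeaf H₁) (h₂ : G.TwinToLeaf H₂) :
    Nonempty (H₁ ≃g H₂) ∨ ∃ K, H₁.TwinToLeaf K ∧ H₂.TwinToLeaf K := by
  obtain ⟨s, t, hst, hN, rfl⟩ := h₁
  obtain ⟨s', t', hst', hN', rfl⟩ := h₂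
  by_cases hdisj : s' ≠ s ∧ s' ≠ t ∧ t' ≠ s ∧ t' ≠ t
  · obtain ⟨h₁, h₂, h₃, h₄⟩ := hdisj
    refine .inr ⟨_, ⟨s', t', hst', ?_, rfl⟩,
      ⟨s, t, hst, ?_, replaceByLeaf_comm h₄.symm h₂.symm h₃.symm⟩⟩
    · rw [neighborSet_replaceByLeaf_of_ne h₁ h₂, neighborSet_replaceByLeaf_of_ne h₃ h₄,
        hN']
    · rw [neighborSet_replaceByLeaf_of_ne h₁.symm h₃.symm,
        neighborSet_replaceByLeaf_of_ne h₂.symm h₄.symm, hN]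
  · -- The two pairs meet, so all four vertices are twins and an automorphism of `G` moves one
    -- pair onto the other.
    have hs' : G.neighborSet s' = G.neighborSet s := by grind
    obtain ⟨σ, hσs, hσt⟩ :=
      exists_iso_apply_eq_of_neighborSet_eq hst hst' hN.symm hs' (hN' ▸ hs')
    have e := σ.replaceByLeaf s t
    rw [hσs, hσt] at e
    exact .inl ⟨e⟩

section ReplaceVertex

variable [DecidableEq V]

theorem neighborSet_replaceVertex_self_eq (hst : s ≠ t) :
    (G.replaceVertex s t).neighborSet s = (G.replaceVertex s t).neighborSet t := by
  ext b
  simp [replaceVertex, hst]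

theorem neighborSet_replaceVertex_of_neighborSet_eq_singleton {s' t' : V}
    (h : G.neighborSet t' = {s'}) (ht : t' ≠ t) (hs : s' ≠ t) (hss : s ≠ s') :
    (G.replaceVertex s t).neighborSet t' = {s'} := by
  have h' (x : V) : G.Adj t' x ↔ x = s' := Set.ext_iff.1 h x
  ext b
  simp only [mem_neighborSet, replaceVertex, Set.mem_singleton_iff]
  grind

theorem replaceVertex_replaceByLeaf (hst : s ≠ t) (h : G.neighborSet s = G.neighborSet t) :
    (G.replaceByLeaf s t).replaceVertex s t = G := by
  have h' (x : V) : G.Adj s x ↔ G.Adj t x := Set.ext_iff.1 h x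
  ext a b
  simp only [replaceVertex, replaceByLeaf_adj]
  grind [G.loopless.irrefl, G.adj_comm]

theorem replaceByLeaf_replaceVertex (h : G.neighborSet t = {s}) :
    (G.replaceVertex s t).replaceByLeaf s t = G := by
  have h' (x : V) : G.Adj t x ↔ x = s := Set.ext_iff.1 h x
  ext a b
  simp only [replaceVertex, replaceByLeaf_adj]
  grind [G.loopless.irrefl, G.adj_comm]

theorem replaceVertex_comm {s' t' : V} (h₁ : t ≠ t') (h₂ : t ≠ s') (h₃ : s ≠ t') :
    (G.replaceVertex s t).replaceVertex s' t' = (G.replaceVertex s' t').replaceVertex s t := by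
  ext a b
  simp only [replaceVertex]
  grind [G.adj_comm]

def Iso.replaceVertex [DecidableEq W] {G' : SimpleGraph W} (e : G ≃g G') (s t : V) :
    G.replaceVertex s t ≃g G'.replaceVertex (e s) (e t) where
  toEquiv := e.toEquiv
  map_rel_iff' := by simp [SimpleGraph.replaceVertex, e.map_adj_iff]

theorem twinToLeaf_iff :
    H.TwinToLeaf G ↔ ∃ s t, G.neighborSet t = {s} ∧ H = G.replaceVertex s t := by
  constructor
  · rintro ⟨s, t, hst, hN, rfl⟩
    exact ⟨s, t, neighborSet_replaceByLeaf_self hst, (replaceVertex_replaceByLeaf hst hN).symm⟩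
  · rintro ⟨s, t, ht, rfl⟩
    have hst : s ≠ t := (adj_of_neighborSet_eq_singleton ht).ne.symm
    exact ⟨s, t, hst, neighborSet_replaceVertex_self_eq hst,
      (replaceByLeaf_replaceVertex ht).symm⟩

end ReplaceVertex

theorem exists_twinToLeaf_left_iff :
    (∃ H, TwinToLeaf H G) ↔ ∃ v, (G.neighborSet v).ncard = 1 := by
  classical
  simp only [twinToLeaf_iff, Set.ncard_eq_one]
  constructor
  · rintro ⟨_, s, t, h, -⟩
    exact ⟨t, s, h⟩
  · rintro ⟨t, s, h⟩
    exact ⟨_, s, t, h, rfl⟩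

theorem TwinToLeaf.exists_iso_left {G' : SimpleGraph W} (h : H.TwinToLeaf G) (e : G ≃g G') :
    ∃ H', H'.TwinToLeaf G' ∧ Nonempty (H ≃g H') := by
  classical
  obtain ⟨s, t, ht, rfl⟩ := twinToLeaf_iff.1 h
  refine ⟨_, twinToLeaf_iff.2 ⟨e s, e t, ?_, rfl⟩, ⟨e.replaceVertex s t⟩⟩
  rw [← e.image_neighborSet, ht, Set.image_singleton]

theorem Connected.neighborSet_eq_singleton_of_forall [Nontrivial V] (hG : G.Connected) {v x : V}
    (h : ∀ z, G.Adj v z → z = x) : G.neighborSet v = {x} :=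
  (G.neighborSet_nonempty.2 (hG.preconnected.not_isIsolated v)).subset_singleton_iff.1 h

section Fintype

variable [Fintype V]

theorem Connected.exists_adj_of_card_lt (hG : G.Connected) {S : Finset V} {a : V} (ha : a ∈ S)
    (hS : S.card < Fintype.card V) : ∃ x ∈ S, ∃ y ∉ S, G.Adj x y := by
  obtain ⟨b, -, hb⟩ := Finset.exists_mem_notMem_of_card_lt_card (t := Finset.univ) hS
  obtain ⟨p⟩ := hG.preconnected a b
  obtain ⟨d, -, hd₁, hd₂⟩ := p.exists_boundary_dart S ha hb
  exact ⟨d.fst, hd₁, d.snd, hd₂, d.adj⟩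

theorem Connected.ne_of_neighborSet_eq_singleton (hG : G.Connected) (hV : 3 ≤ Fintype.card V)
    {s' t' : V} (ht : G.neighborSet t = {s}) (ht' : G.neighborSet t' = {s'}) : t ≠ s' := by
  classical
  rintro rfl
  obtain rfl : t' = s := by
    simpa [← mem_neighborSet, ht] using (adj_of_neighborSet_eq_singleton ht').symm
  obtain ⟨x, hx, y, hy, hxy⟩ := hG.exists_adj_of_card_lt (S := {t, t'}) (a := t) (by simp)
    (Finset.card_le_two.trans_lt hV)
  simp only [Finset.mem_insert, Finset.mem_singleton] at hx hy
  rcases hx with rfl | rfl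
  · exact hy (.inr (by simpa [← mem_neighborSet, ht] using hxy))
  · exact hy (.inl (by simpa [← mem_neighborSet, ht'] using hxy))

theorem TwinToLeaf.diamond_left (hG : G.Connected) (hV : 3 ≤ Fintype.card V)
    (h₁ : TwinToLeaf H₁ G) (h₂ : TwinToLeaf H₂ G) :
    Nonempty (H₁ ≃g H₂) ∨ ∃ K, TwinToLeaf K H₁ ∧ TwinToLeaf K H₂ := by
  classical
  obtain ⟨s, t, ht, rfl⟩ := twinToLeaf_iff.1 h₁
  obtain ⟨s', t', ht', rfl⟩ := twinToLeaf_iff.1 h₂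
  have hst : s ≠ t := (adj_of_neighborSet_eq_singleton ht).ne.symm
  have hst' : s' ≠ t' := (adj_of_neighborSet_eq_singleton ht').ne.symm
  by_cases htt : t = t'
  · subst htt
    obtain rfl : s = s' := Set.singleton_eq_singleton_iff.1 (ht.symm.trans ht')
    exact .inl ⟨Iso.refl⟩
  by_cases hss : s = s'
  · subst hss
    let σ := Iso.ofNeighborSetEq (Equiv.swap t t') (neighborSet_swap_apply (ht.trans ht'.symm))
    have hσs : σ s = s := Equiv.swap_apply_of_ne_of_ne hst hst'
    have hσt : σ t = t' := Equiv.swap_apply_left t t'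
    have e := σ.replaceVertex s t
    rw [hσs, hσt] at e
    exact .inl ⟨e⟩
  have hts' := hG.ne_of_neighborSet_eq_singleton hV ht ht'
  have ht's := hG.ne_of_neighborSet_eq_singleton hV ht' ht
  refine .inr ⟨_, twinToLeaf_iff.2 ⟨s', t', ?_, rfl⟩,
    twinToLeaf_iff.2 ⟨s, t, ?_, replaceVertex_comm htt hts' (Ne.symm ht's)⟩⟩
  · exact neighborSet_replaceVertex_of_neighborSet_eq_singleton ht' (Ne.symm htt) (Ne.symm hts')
      hss
  · exact neighborSet_replaceVertex_of_neighborSet_eq_singleton ht htt (Ne.symm ht's)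
      (Ne.symm hss)

theorem leafSet_replaceByLeaf_ssubset (hG : G.Connected) (hV : 4 ≤ Fintype.card V) {x : V}
    (hs : G.neighborSet s = {x}) (ht : G.neighborSet t = {x}) (hst : s ≠ t) :
    (G.replaceByLeaf s t).leafSet ⊂ G.leafSet := by
  classical
  have hsx := adj_of_neighborSet_eq_singleton hs
  have hxt : x ≠ t := (adj_of_neighborSet_eq_singleton ht).ne.symm
  obtain ⟨b, hxb, hbs, hbt, -⟩ : ∃ b, G.Adj x b ∧ b ≠ s ∧ b ≠ t ∧ b ≠ x := by
    obtain ⟨a, ha, b, hb, hab⟩ := hG.exists_adj_of_card_lt (S := {s, t, x}) (a := x) (by simp)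
      (Finset.card_le_three.trans_lt hV)
    simp only [Finset.mem_insert, Finset.mem_singleton, not_or] at ha hb
    rcases ha with rfl | rfl | rfl
    · exact absurd (by simpa [← mem_neighborSet, hs] using hab) hb.2.2
    · exact absurd (by simpa [← mem_neighborSet, ht] using hab) hb.2.2
    · exact ⟨b, hab, hb⟩
  have hsH : s ∉ (G.replaceByLeaf s t).leafSet :=
    ncard_neighborSet_ne_one_of_adj (a := t) (b := x) (by simp [replaceByLeaf_adj, hst])
      (by simp [replaceByLeaf_adj, hsx, hst, hxt]) hxt.symm
  refine LE.le.ssubset_of_mem_notMem (fun y hy => ?_) (by simp [leafSet, hs]) hsH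
  by_cases hyt : y = t
  · simp [hyt, leafSet, ht]
  by_cases hys : y = s
  · exact absurd (hys ▸ hy) hsH
  by_cases hyx : y = x
  · subst hyx
    exact absurd hy (ncard_neighborSet_ne_one_of_adj (a := s) (b := b)
      (by simp [replaceByLeaf_adj, hsx.symm, hst, hxt]) (by simp [replaceByLeaf_adj, hxb, hxt, hbt])
      (Ne.symm hbs))
  · have htN : t ∉ G.neighborSet y := fun h =>
      hyx (by simpa [← mem_neighborSet, ht] using h.symm)
    simpa [leafSet, neighborSet_replaceByLeaf_of_ne hys hyt, Set.sdiff_singleton_eq_self htN]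
      using hy

-- On the path with three vertices the step merely relabels the graph, hence `4 ≤ card V`.
theorem TwinToLeaf.toLex_lt (hG : G.Connected) (hV : 4 ≤ Fintype.card V) (h : G.TwinToLeaf H) :
    toLex (H.edgeSet.ncard, H.leafSet.ncard) < toLex (G.edgeSet.ncard, G.leafSet.ncard) := by
  obtain ⟨s, t, hst, hN, rfl⟩ := h
  have hE := ncard_edgeSet_replaceByLeaf hst (not_adj_of_neighborSet_eq hN)
  have : Nontrivial V := Fintype.one_lt_card_iff_nontrivial.1 (by omega)
  have hpos : 0 < (G.neighborSet t).ncard := (Set.ncard_pos (Set.toFinite _)).2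
    (G.neighborSet_nonempty.2 (hG.preconnected.not_isIsolated t))
  rw [Prod.Lex.toLex_lt_toLex]
  by_cases h1 : (G.neighborSet t).ncard = 1
  · obtain ⟨x, hx⟩ := Set.ncard_eq_one.1 h1
    exact .inr ⟨by omega,
      Set.ncard_lt_ncard (leafSet_replaceByLeaf_ssubset hG hV (hN.trans hx) hx hst)⟩
  · exact .inl (by omega)

theorem exists_forall_eq_or_eq_or_eq_of_card_eq_three (h3 : Fintype.card V = 3) {a b : V}
    (hab : a ≠ b) : ∃ c, c ≠ a ∧ c ≠ b ∧ ∀ z, z = a ∨ z = b ∨ z = c := by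
  classical
  obtain ⟨c, -, hc⟩ := Finset.exists_mem_notMem_of_card_lt_card (s := {a, b}) (t := Finset.univ)
    (by rw [Finset.card_univ, h3]; exact Finset.card_le_two.trans_lt (by norm_num))
  simp only [Finset.mem_insert, Finset.mem_singleton, not_or] at hc
  have huniv : ({a, b, c} : Finset V) = Finset.univ := Finset.eq_univ_of_card _
    (h3 ▸ Finset.card_eq_three.2 ⟨a, b, c, hab, Ne.symm hc.1, Ne.symm hc.2, rfl⟩)
  refine ⟨c, hc.1, hc.2, fun z => ?_⟩
  have hz := Finset.mem_univ z
  rw [← huniv] at hz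
  simpa using hz

theorem Connected.injective_neighborSet_iff_of_card_eq_three (hG : G.Connected)
    (h3 : Fintype.card V = 3) :
    Function.Injective G.neighborSet ↔ ∀ v, (G.neighborSet v).ncard ≠ 1 := by
  have : Nontrivial V := Fintype.one_lt_card_iff_nontrivial.1 (by omega)
  constructor
  · intro hinj v hv
    obtain ⟨x, hx⟩ := Set.ncard_eq_one.1 hv
    obtain ⟨y, hyv, hyx, hV⟩ :=
      exists_forall_eq_or_eq_or_eq_of_card_eq_three h3 (adj_of_neighborSet_eq_singleton hx).ne
    refine hyv (hinj ((hG.neighborSet_eq_singleton_of_forall fun z hz => ?_).trans hx.symm))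
    rcases hV z with rfl | rfl | rfl
    · exact absurd (by simpa [← mem_neighborSet, hx] using hz.symm) hyx
    · rfl
    · exact absurd hz (G.loopless.irrefl _)
  · intro hleaf u v huv
    by_contra hne
    obtain ⟨w, -, -, hV⟩ := exists_forall_eq_or_eq_or_eq_of_card_eq_three h3 hne
    refine hleaf u ?_
    rw [hG.neighborSet_eq_singleton_of_forall (x := w) fun z hz => ?_, Set.ncard_singleton]
    rcases hV z with rfl | rfl | rfl
    · exact absurd hz (G.loopless.irrefl _)
    · exact absurd hz (not_adj_of_neighborSet_eq huv)
    · rfl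

theorem Connected.injective_neighborSet_iff_of_card_lt_four (hG : G.Connected)
    (h2 : Fintype.card V ≠ 2) (h4 : Fintype.card V < 4) :
    Function.Injective G.neighborSet ↔ ∀ v, (G.neighborSet v).ncard ≠ 1 := by
  obtain h1 | h3 : Fintype.card V ≤ 1 ∨ Fintype.card V = 3 := by omega
  · have := Fintype.card_le_one_iff_subsingleton.1 h1
    refine iff_of_true (Function.injective_of_subsingleton _) fun v hv => ?_
    obtain ⟨a, ha⟩ := Set.ncard_eq_one.1 hv
    exact (adj_of_neighborSet_eq_singleton ha).ne (Subsingleton.elim v a)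
  · exact hG.injective_neighborSet_iff_of_card_eq_three h3

end Fintype

end SimpleGraph

section IsoClasses

open SimpleGraph

variable {n : ℕ} {P : SimpleGraph (Fin n) → Prop}

theorem card_quotient_graphIsoSetoid_and (P Q : SimpleGraph (Fin n) → Prop)
    (q : Quotient (graphIsoSetoid P) → Prop) (hq : ∀ G, q (Quotient.mk _ G) ↔ Q G.1) :
    Nat.card (Quotient (graphIsoSetoid fun G => P G ∧ Q G)) = Nat.card {x // q x} :=
  Nat.card_congr <|
    (Quotient.congr (Equiv.subtypeSubtypeEquivSubtypeInter P Q).symm fun _ _ => Iff.rfl).trans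
      (Equiv.subtypeQuotientEquivQuotientSubtype (fun G : {G // P G} => Q G.1) q
        (s₂ := (graphIsoSetoid fun G => P G ∧ Q G).comap
          (Equiv.subtypeSubtypeEquivSubtypeInter P Q))
        (fun G => (hq G).symm) fun _ _ => Iff.rfl).symm

variable (P) in
def IsoClassTwinToLeaf : Quotient (graphIsoSetoid P) → Quotient (graphIsoSetoid P) → Prop :=
  Relation.Map (fun G H : {G // P G} => G.1.TwinToLeaf H.1) (Quotient.mk _) (Quotient.mk _)

theorem exists_twinToLeaf_of_graphIsoSetoid
    (hiso : ∀ G H : SimpleGraph (Fin n), (G ≃g H) → P G → P H) (G G' H : {G // P G})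
    (hG : graphIsoSetoid P G G') (h : G.1.TwinToLeaf H.1) :
    ∃ H' : {G // P G}, G'.1.TwinToLeaf H'.1 ∧ graphIsoSetoid P H H' := by
  obtain ⟨e⟩ := hG
  obtain ⟨H', h', ⟨f⟩⟩ := h.exists_iso e
  exact ⟨⟨H', hiso _ _ f H.2⟩, h', ⟨f⟩⟩

theorem exists_twinToLeaf_left_of_graphIsoSetoid
    (hiso : ∀ G H : SimpleGraph (Fin n), (G ≃g H) → P G → P H) (G G' H : {G // P G})
    (hG : graphIsoSetoid P G G') (h : H.1.TwinToLeaf G.1) :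
    ∃ H' : {G // P G}, H'.1.TwinToLeaf G'.1 ∧ graphIsoSetoid P H H' := by
  obtain ⟨e⟩ := hG
  obtain ⟨H', h', ⟨f⟩⟩ := TwinToLeaf.exists_iso_left h e
  exact ⟨⟨H', hiso _ _ f H.2⟩, h', ⟨f⟩⟩

theorem isoClassTwinToLeaf_mk_iff
    (hiso : ∀ G H : SimpleGraph (Fin n), (G ≃g H) → P G → P H)
    (G : {G // P G}) (y : Quotient (graphIsoSetoid P)) :
    IsoClassTwinToLeaf P (Quotient.mk _ G) y ↔
      ∃ H, G.1.TwinToLeaf H.1 ∧ Quotient.mk _ H = y :=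
  Relation.map_mk_mk_iff (exists_twinToLeaf_of_graphIsoSetoid hiso) G y

theorem isoClassTwinToLeaf_mk_left_iff
    (hiso : ∀ G H : SimpleGraph (Fin n), (G ≃g H) → P G → P H)
    (G : {G // P G}) (y : Quotient (graphIsoSetoid P)) :
    IsoClassTwinToLeaf P y (Quotient.mk _ G) ↔
      ∃ H, H.1.TwinToLeaf G.1 ∧ Quotient.mk _ H = y := by
  change flip (IsoClassTwinToLeaf P) _ _ ↔ _
  rw [IsoClassTwinToLeaf, Relation.flip_map]
  exact Relation.map_mk_mk_iff (exists_twinToLeaf_left_of_graphIsoSetoid hiso) G y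

theorem forall_not_isoClassTwinToLeaf_mk_iff
    (hiso : ∀ G H : SimpleGraph (Fin n), (G ≃g H) → P G → P H)
    (hstep : ∀ G H : SimpleGraph (Fin n), G.TwinToLeaf H → (P G ↔ P H)) (G : {G // P G}) :
    (∀ y, ¬IsoClassTwinToLeaf P (Quotient.mk _ G) y) ↔ Function.Injective G.1.neighborSet := by
  rw [← not_iff_not, not_forall_not, ← exists_twinToLeaf_iff]
  simp only [isoClassTwinToLeaf_mk_iff hiso]
  constructor
  · rintro ⟨_, H, h, -⟩
    exact ⟨H.1, h⟩
  · rintro ⟨H, h⟩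
    exact ⟨_, ⟨H, (hstep _ _ h).1 G.2⟩, h, rfl⟩

theorem forall_not_isoClassTwinToLeaf_mk_left_iff
    (hiso : ∀ G H : SimpleGraph (Fin n), (G ≃g H) → P G → P H)
    (hstep : ∀ G H : SimpleGraph (Fin n), G.TwinToLeaf H → (P G ↔ P H)) (G : {G // P G}) :
    (∀ y, ¬IsoClassTwinToLeaf P y (Quotient.mk _ G)) ↔
      ∀ v, (G.1.neighborSet v).ncard ≠ 1 := by
  rw [← not_iff_not, not_forall_not, not_forall_not, ← exists_twinToLeaf_left_iff]
  simp only [isoClassTwinToLeaf_mk_left_iff hiso]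
  constructor
  · rintro ⟨_, H, h, -⟩
    exact ⟨H.1, h⟩
  · rintro ⟨H, h⟩
    exact ⟨_, ⟨H, (hstep _ _ h).2 G.2⟩, h, rfl⟩

theorem reflGenDiamond_isoClassTwinToLeaf
    (hiso : ∀ G H : SimpleGraph (Fin n), (G ≃g H) → P G → P H)
    (hstep : ∀ G H : SimpleGraph (Fin n), G.TwinToLeaf H → (P G ↔ P H)) :
    Relation.ReflGenDiamond (IsoClassTwinToLeaf P) := by
  refine Relation.reflGenDiamond_map_mk_mk (exists_twinToLeaf_of_graphIsoSetoid hiso)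
    fun G H₁ H₂ h₁ h₂ => ?_
  rcases h₁.diamond h₂ with he | ⟨K, hK₁, hK₂⟩
  · exact .inl he
  · exact .inr ⟨⟨K, (hstep _ _ hK₁).1 H₁.2⟩, hK₁, hK₂⟩

theorem reflGenDiamond_flip_isoClassTwinToLeaf (hn : 3 ≤ n)
    (hiso : ∀ G H : SimpleGraph (Fin n), (G ≃g H) → P G → P H)
    (hconn : ∀ G, P G → G.Connected)
    (hstep : ∀ G H : SimpleGraph (Fin n), G.TwinToLeaf H → (P G ↔ P H)) :
    Relation.ReflGenDiamond (flip (IsoClassTwinToLeaf P)) := by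
  rw [IsoClassTwinToLeaf, Relation.flip_map]
  refine Relation.reflGenDiamond_map_mk_mk (exists_twinToLeaf_left_of_graphIsoSetoid hiso)
    fun G H₁ H₂ h₁ h₂ => ?_
  rcases TwinToLeaf.diamond_left (hconn G.1 G.2) (by simpa using hn) h₁ h₂ with
    he | ⟨K, hK₁, hK₂⟩
  · exact .inl he
  · exact .inr ⟨⟨K, (hstep _ _ hK₁).2 H₁.2⟩, hK₁, hK₂⟩

theorem card_isoClasses_injective_neighborSet_eq (hn : 4 ≤ n)
    (hiso : ∀ G H : SimpleGraph (Fin n), (G ≃g H) → P G → P H)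
    (hconn : ∀ G, P G → G.Connected)
    (hstep : ∀ G H : SimpleGraph (Fin n), G.TwinToLeaf H → (P G ↔ P H)) :
    Nat.card (Quotient (graphIsoSetoid fun G => P G ∧ Function.Injective G.neighborSet)) =
      Nat.card
        (Quotient (graphIsoSetoid fun G => P G ∧ ∀ v, (G.neighborSet v).ncard ≠ 1)) := by
  rw [card_quotient_graphIsoSetoid_and P _ (fun x => ∀ y, ¬IsoClassTwinToLeaf P x y)
      (forall_not_isoClassTwinToLeaf_mk_iff hiso hstep),
    card_quotient_graphIsoSetoid_and P _ (fun x => ∀ y, ¬IsoClassTwinToLeaf P y x)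
      (forall_not_isoClassTwinToLeaf_mk_left_iff hiso hstep)]
  refine Relation.card_terminal_eq_card_initial
    (Quotient.lift (fun G : {G // P G} => toLex (G.1.edgeSet.ncard, G.1.leafSet.ncard))
      fun G H ⟨e⟩ => by rw [e.ncard_edgeSet_eq, e.ncard_leafSet_eq])
    ?_ (reflGenDiamond_isoClassTwinToLeaf hiso hstep)
    (reflGenDiamond_flip_isoClassTwinToLeaf (by omega) hiso hconn hstep)
  rintro _ _ ⟨G, H, h, rfl, rfl⟩
  exact h.toLex_lt (hconn G.1 G.2) (by simpa using hn)

end IsoClasses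

theorem card_pointDetermining_eq_card_noEndpoints_general
    (Φ : ∀ {V : Type}, SimpleGraph V → Prop)
    (hiso : ∀ {V W : Type} [Fintype V] [Fintype W]
      (G : SimpleGraph V) (H : SimpleGraph W), Nonempty (G ≃g H) → (Φ G ↔ Φ H))
    (hconn : ∀ {V : Type} [Fintype V] (G : SimpleGraph V), Φ G → G.Connected)
    (hend : ∀ {V : Type} [Fintype V] (G : SimpleGraph V) (v : V),
      (G.neighborSet v).ncard = 1 →
      (Φ G ↔ Φ (G.induce {u : V | u ≠ v})))
    (hdup : ∀ {V : Type} [Fintype V] (G : SimpleGraph V) (v w : V),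
      v ≠ w → 3 ≤ Fintype.card V → G.neighborSet v = G.neighborSet w →
      (Φ G ↔ Φ (G.induce {u : V | u ≠ v})))
    (n : ℕ) (hn : n ≠ 2) :
    Nat.card (Quotient (graphIsoSetoid (fun G : SimpleGraph (Fin n) =>
        Φ G ∧ ∀ u v : Fin n, G.neighborSet u = G.neighborSet v → u = v))) =
      Nat.card (Quotient (graphIsoSetoid (fun G : SimpleGraph (Fin n) =>
        Φ G ∧ ∀ v : Fin n, (G.neighborSet v).ncard ≠ 1))) := by
  rcases lt_or_ge n 4 with hn4 | hn4
  · have hP : (fun G : SimpleGraph (Fin n) => Φ G ∧ Function.Injective G.neighborSet) =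
        fun G => Φ G ∧ ∀ v, (G.neighborSet v).ncard ≠ 1 :=
      funext fun G => propext <| and_congr_right fun hG =>
        (hconn G hG).injective_neighborSet_iff_of_card_lt_four (by simpa) (by simpa)
    exact congrArg (fun P => Nat.card (Quotient (graphIsoSetoid P))) hP
  refine card_isoClasses_injective_neighborSet_eq hn4 (fun G H e => (hiso G H ⟨e⟩).1)
    (fun G => hconn G) ?_
  rintro G _ ⟨s, t, hst, hN, rfl⟩
  rw [hdup G t s hst.symm (by rw [Fintype.card_fin]; omega) hN.symm,
    hend _ t (by rw [SimpleGraph.neighborSet_replaceByLeaf_self hst, Set.ncard_singleton]),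
    SimpleGraph.induce_replaceByLeaf]

/-- Let `Φ` be an isomorphism-invariant class of finite simple graphs such
that every graph of `Φ` is connected, the one-vertex graph is in `Φ`, `Φ` is
closed under creating and deleting endpoints, and the graphs of `Φ` on at
least two vertices are closed under creating and deleting duplicate vertices.
Then for every `n ≠ 2`, the number of isomorphism classes of point-determining
`Φ`-graphs on `n` vertices equals the number of isomorphism classes of
`Φ`-graphs on `n` vertices without endpoints (no vertex of degree 1). -/
theorem card_pointDetermining_eq_card_noEndpoints
    (Φ : ∀ {V : Type}, SimpleGraph V → Prop)
    (hiso : ∀ {V W : Type} [Fintype V] [Fintype W]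
      (G : SimpleGraph V) (H : SimpleGraph W), Nonempty (G ≃g H) → (Φ G ↔ Φ H))
    (hconn : ∀ {V : Type} [Fintype V] (G : SimpleGraph V), Φ G → G.Connected)
    (hone : Φ (⊥ : SimpleGraph (Fin 1)))
    (hend : ∀ {V : Type} [Fintype V] (G : SimpleGraph V) (v : V),
      (G.neighborSet v).ncard = 1 →
      (Φ G ↔ Φ (G.induce {u : V | u ≠ v})))
    (hdup : ∀ {V : Type} [Fintype V] (G : SimpleGraph V) (v w : V),
      v ≠ w → 3 ≤ Fintype.card V → G.neighborSet v = G.neighborSet w →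
      (Φ G ↔ Φ (G.induce {u : V | u ≠ v})))
    (n : ℕ) (hn : n ≠ 2) :
    Nat.card (Quotient (graphIsoSetoid (fun G : SimpleGraph (Fin n) =>
        Φ G ∧ ∀ u v : Fin n, G.neighborSet u = G.neighborSet v → u = v))) =
      Nat.card (Quotient (graphIsoSetoid (fun G : SimpleGraph (Fin n) =>
        Φ G ∧ ∀ v : Fin n, (G.neighborSet v).ncard ≠ 1))) :=
  card_pointDetermining_eq_card_noEndpoints_general Φ hiso hconn hend hdup n hn
end
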